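/- Let 1 ≤ k1 ≤ n1, 1 ≤ k2 ≤ n2, n1·n2 ≤ m, and n1 − k1 ≤ n2 − k2. Let g1 ∈ L^{n1} with wt_R(g1) = n1 and g2 ∈ L^{n2} with wt_R(g2) = n2, and set G1 = Moore(g1, k1) and G2 = Moore(g2, k2). Then every nonzero codeword of the row space of G1 ⊗ G2 has rank weight at least n2 − k2 + 1, and there exists a nonzero codeword of the row space of G1 ⊗ G2 with rank weight at most (n1 − k1 + 1)·(n2 − k2 + 1). -/

import Mathlib

/-!
A codeword of `Moore(g₁, k₁) ⊗ Moore(g₂, k₂)` with message `x` is `c (j₁, j₂) = B (g₁ j₁) (g₂ j₂)`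
for the `K`-bilinear form `B a b = ∑ x (i₁, i₂) * a ^ q ^ i₁ * b ^ q ^ i₂`, so the support of `c`
contains `B (V₁, V₂)`, where `Vᵢ` is the span of the entries of `gᵢ`. A nonzero linearized
polynomial `∑_{i < k} xᵢ a ^ q ^ i` has at most `q ^ (k - 1)` roots, so its kernel has dimension
`< k`. Since `dim V₁ = n₁ ≥ k₁`, some `a ∈ V₁` makes `B a` a nonzero linearized polynomial of
`q`-degree `< k₂`, and `B a` maps `V₂` onto a subspace of the support of dimension
`≥ n₂ - k₂ + 1`.

For the other bound, pick codewords `c₁`, `c₂` of the two Moore codes that vanish at `kᵢ - 1`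
coordinates (they are nonzero because the Moore matrices have full row rank); their outer product
is a codeword of the Kronecker code with at most `(n₁ - k₁ + 1) (n₂ - k₂ + 1)` nonzero entries,
and the rank weight is at most the Hamming weight.
-/

open Matrix Kronecker

/-- Rank weight of a vector over the extension `L` of the base field `K`. -/
noncomputable def rankWeight (K : Type*) {L : Type*} [Field K] [Field L] [Algebra K L]
    {ι : Type*} (v : ι → L) : ℕ :=
  Module.finrank K (Submodule.span K (Set.range v))

/-- The `k × n` Moore matrix of `g`: entry `(i, j)` is `g j ^ q ^ i`. -/
def moore (q : ℕ) {L : Type*} [Field L] {n : ℕ} (g : Fin n → L) (k : ℕ) :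
    Matrix (Fin k) (Fin n) L :=
  Matrix.of fun i j => g j ^ q ^ (i : ℕ)

open Module Polynomial Finset

namespace Polynomial

variable {R : Type*} [CommRing R]

noncomputable def linearized (q : ℕ) {k : ℕ} (x : Fin k → R) : R[X] :=
  ∑ i : Fin k, monomial (q ^ (i : ℕ)) (x i)

lemma eval_linearized (q : ℕ) {k : ℕ} (x : Fin k → R) (a : R) :
    (linearized q x).eval a = ∑ i : Fin k, x i * a ^ q ^ (i : ℕ) := by
  simp [linearized, eval_finsetSum]

lemma coeff_linearized_pow {q : ℕ} (hq : 1 < q) {k : ℕ} (x : Fin k → R) (i : Fin k) :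
    (linearized q x).coeff (q ^ (i : ℕ)) = x i := by
  rw [linearized, finsetSum_coeff, Finset.sum_eq_single i]
  · simp
  · intro j _ hji
    rw [coeff_monomial, if_neg]
    exact fun h => hji (Fin.ext (Nat.pow_right_injective hq h))
  · simp

lemma linearized_ne_zero {q : ℕ} (hq : 1 < q) {k : ℕ} {x : Fin k → R} (hx : x ≠ 0) :
    linearized q x ≠ 0 := by
  obtain ⟨i, hi⟩ := Function.ne_iff.1 hx
  exact fun h => hi (by rw [← coeff_linearized_pow hq x i, h, coeff_zero, Pi.zero_apply])

lemma natDegree_linearized_le {q : ℕ} (hq : 0 < q) {k : ℕ} (x : Fin k → R) :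
    (linearized q x).natDegree ≤ q ^ (k - 1) :=
  natDegree_sum_le_of_forall_le _ _ fun _ _ =>
    (natDegree_monomial_le _).trans (Nat.pow_le_pow_right hq (by omega))

end Polynomial

section LinearizedMap

variable (K : Type*) {L : Type*} [Field K] [Fintype K] [Field L] [Algebra K L]

noncomputable def linearizedMap {k : ℕ} : (Fin k → L) →ₗ[L] Module.End K L :=
  Fintype.linearCombination L fun i => (FiniteField.frobeniusAlgHom K L).toLinearMap ^ (i : ℕ)

variable {K}

lemma linearizedMap_apply {k : ℕ} (x : Fin k → L) (a : L) :
    linearizedMap K x a = ∑ i : Fin k, x i * a ^ Fintype.card K ^ (i : ℕ) := by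
  simp [linearizedMap, Fintype.linearCombination_apply, Module.End.coe_pow,
    FiniteField.coe_frobeniusAlgHom, pow_iterate]

lemma coe_ker_linearizedMap {k : ℕ} (x : Fin k → L) :
    (LinearMap.ker (linearizedMap K x) : Set L) =
      {a | (linearized (Fintype.card K) x).IsRoot a} := by
  ext a
  simp [IsRoot, eval_linearized, linearizedMap_apply]

variable (K) in
lemma finiteDimensional_ker_linearizedMap {k : ℕ} {x : Fin k → L} (hx : x ≠ 0) :
    FiniteDimensional K (LinearMap.ker (linearizedMap K x)) :=
  have : Finite (LinearMap.ker (linearizedMap K x)) :=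
    Set.Finite.to_subtype <| coe_ker_linearizedMap (K := K) x ▸
      finite_setOfPred_isRoot (linearized_ne_zero Fintype.one_lt_card hx)
  Module.Finite.of_finite

variable (K) in
lemma finrank_ker_linearizedMap_le {k : ℕ} {x : Fin k → L} (hx : x ≠ 0) :
    finrank K (LinearMap.ker (linearizedMap K x)) ≤ k - 1 := by
  classical
  have := finiteDimensional_ker_linearizedMap K hx
  set P := linearized (Fintype.card K) x
  have hroots : (LinearMap.ker (linearizedMap K x) : Set L) = P.roots.toFinset := by
    rw [coe_ker_linearizedMap]
    ext a
    simp [mem_roots (linearized_ne_zero Fintype.one_lt_card hx), P]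
  refine (Nat.pow_le_pow_iff_right (Fintype.one_lt_card (α := K))).1 ?_
  calc Fintype.card K ^ finrank K (LinearMap.ker (linearizedMap K x))
      = Nat.card (LinearMap.ker (linearizedMap K x)) := by
        rw [Module.natCard_eq_pow_finrank (K := K), Nat.card_eq_fintype_card]
    _ = #P.roots.toFinset := by
        rw [← Set.ncard_coe_finset, ← hroots]
        exact Nat.card_coe_set_eq (LinearMap.ker (linearizedMap K x) : Set L)
    _ ≤ P.natDegree := (Multiset.toFinset_card_le _).trans (card_roots' _)
    _ ≤ _ := natDegree_linearized_le Fintype.card_pos x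

lemma exists_mem_linearizedMap_ne_zero {k : ℕ} {x : Fin k → L} (hx : x ≠ 0)
    {V : Submodule K L} (hV : k ≤ finrank K V) : ∃ a ∈ V, linearizedMap K x a ≠ 0 := by
  by_contra! h
  have := finiteDimensional_ker_linearizedMap K hx
  have := Submodule.finrank_mono fun a ha => LinearMap.mem_ker.2 (h a ha)
  have := finrank_ker_linearizedMap_le K hx
  have : k ≠ 0 := by rintro rfl; exact hx (Subsingleton.elim _ _)
  omega

lemma finrank_map_linearizedMap_ge {k : ℕ} {x : Fin k → L} (hx : x ≠ 0) (V : Submodule K L)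
    [FiniteDimensional K V] :
    finrank K V - (k - 1) ≤ finrank K (V.map (linearizedMap K x)) := by
  have := finiteDimensional_ker_linearizedMap K hx
  set f := (linearizedMap K x).domRestrict V
  have hf := f.finrank_range_add_finrank_ker
  rw [LinearMap.range_domRestrict] at hf
  have : finrank K (LinearMap.ker f) ≤ finrank K (LinearMap.ker (linearizedMap K x)) := by
    rw [← Submodule.finrank_map_subtype_eq]
    refine Submodule.finrank_mono ?_
    rintro _ ⟨a, ha, rfl⟩
    exact ha
  have := finrank_ker_linearizedMap_le K hx
  omega

end LinearizedMap

section HammingNorm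

variable {ι κ R : Type*} [Fintype ι] [Fintype κ]

lemma rankWeight_le_hammingNorm (K : Type*) {L : Type*} [Field K] [Field L] [Algebra K L]
    [DecidableEq L] (v : ι → L) : rankWeight K v ≤ hammingNorm v := by
  have hspan : Submodule.span K (Set.range v) ≤
      Submodule.span K ((univ.filter fun i => v i ≠ 0).image v : Set L) := by
    rw [Submodule.span_le]
    rintro _ ⟨i, rfl⟩
    by_cases hi : v i = 0
    · rw [hi]
      exact zero_mem _
    · exact Submodule.subset_span
        (mem_coe.2 (mem_image_of_mem v (mem_filter.2 ⟨mem_univ _, hi⟩)))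
  exact (Submodule.finrank_mono hspan).trans ((finrank_span_finset_le_card _).trans card_image_le)

lemma hammingNorm_outer [MulZeroClass R] [NoZeroDivisors R] [DecidableEq R]
    (u : ι → R) (v : κ → R) :
    hammingNorm (fun p : ι × κ => u p.1 * v p.2) = hammingNorm u * hammingNorm v := by
  simp only [hammingNorm, ← card_product, ← filter_product, mul_ne_zero_iff, univ_product_univ]

lemma hammingNorm_le_card_sub [Zero R] [DecidableEq R] {v : ι → R} {s : Finset ι}
    (hv : ∀ i ∈ s, v i = 0) : hammingNorm v ≤ Fintype.card ι - #s := by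
  classical
  rw [← card_compl]
  exact card_le_card fun i hi => mem_compl.2 fun his => (mem_filter.1 hi).2 (hv i his)

end HammingNorm

lemma exists_vecMul_ne_zero_eq_zero_on {F ι κ : Type*} [Field F] [Fintype κ]
    (M : Matrix κ ι F) (s : Finset ι) (hs : #s < Fintype.card κ) :
    ∃ x ≠ 0, ∀ j ∈ s, (x ᵥ* M) j = 0 := by
  let f := LinearMap.funLeft F F ((↑) : s → ι) ∘ₗ M.vecMulLinear
  have hker : LinearMap.ker f ≠ ⊥ := LinearMap.ker_ne_bot_of_finrank_lt (by simpa using hs)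
  obtain ⟨x, hx, hx0⟩ := (Submodule.ne_bot_iff _).1 hker
  exact ⟨x, hx0, fun j hj => congrFun (LinearMap.mem_ker.1 hx) ⟨j, hj⟩⟩

lemma outer_vecMul_kronecker {R l m n p : Type*} [CommSemiring R] [Fintype l] [Fintype n]
    (x : l → R) (y : n → R) (A : Matrix l m R) (B : Matrix n p R) :
    (fun i : l × n => x i.1 * y i.2) ᵥ* (A ⊗ₖ B) = fun j => (x ᵥ* A) j.1 * (y ᵥ* B) j.2 := by
  ext ⟨j1, j2⟩
  simp only [vecMul, dotProduct, kroneckerMap_apply, Fintype.sum_prod_type, sum_mul_sum]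
  exact sum_congr rfl fun _ _ => sum_congr rfl fun _ _ => by ring

section Moore

variable {K L : Type*} [Field K] [Fintype K] [Field L] [Algebra K L]

lemma vecMul_moore_apply {n k : ℕ} (g : Fin n → L) (x : Fin k → L) (j : Fin n) :
    (x ᵥ* moore (Fintype.card K) g k) j = linearizedMap K x (g j) := by
  simp [vecMul, dotProduct, moore, linearizedMap_apply]

lemma vecMul_moore_ne_zero {n k : ℕ} {g : Fin n → L} {x : Fin k → L} (hx : x ≠ 0)
    (hk : k ≤ rankWeight K g) : x ᵥ* moore (Fintype.card K) g k ≠ 0 := by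
  intro h
  obtain ⟨a, ha, hne⟩ := exists_mem_linearizedMap_ne_zero hx hk
  have hle : Submodule.span K (Set.range g) ≤ LinearMap.ker (linearizedMap K x) := by
    rw [Submodule.span_le]
    rintro _ ⟨j, rfl⟩
    rw [SetLike.mem_coe, LinearMap.mem_ker, ← vecMul_moore_apply, h, Pi.zero_apply]
  exact hne (hle ha)

lemma exists_vecMul_moore_ne_zero_hammingNorm_le [DecidableEq L] {n k : ℕ} {g : Fin n → L}
    (hk0 : 1 ≤ k) (hk : k ≤ rankWeight K g) :
    ∃ x : Fin k → L, x ᵥ* moore (Fintype.card K) g k ≠ 0 ∧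
      hammingNorm (x ᵥ* moore (Fintype.card K) g k) ≤ n - k + 1 := by
  have hkn : k ≤ n := hk.trans ((finrank_range_le_card g).trans_eq (Fintype.card_fin n))
  obtain ⟨s, -, hs⟩ := exists_subset_card_eq (s := (univ : Finset (Fin n))) (n := k - 1)
    (by rw [card_univ, Fintype.card_fin]; omega)
  obtain ⟨x, hx, hxs⟩ := exists_vecMul_ne_zero_eq_zero_on (moore (Fintype.card K) g k) s
    (by rw [hs, Fintype.card_fin]; omega)
  refine ⟨x, vecMul_moore_ne_zero hx hk, (hammingNorm_le_card_sub hxs).trans ?_⟩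
  rw [hs, Fintype.card_fin]
  omega

variable (K) in
/-- `linearizedMap₂ K x a b = ∑ i₁, ∑ i₂, x (i₁, i₂) * a ^ q ^ i₁ * b ^ q ^ i₂`, `q = #K`. -/
noncomputable def linearizedMap₂ {k1 k2 : ℕ} (x : Fin k1 × Fin k2 → L) :
    L →ₗ[K] L →ₗ[K] L :=
  (linearizedMap K).restrictScalars K ∘ₗ
    LinearMap.pi fun i2 => linearizedMap K fun i1 => x (i1, i2)

variable {n1 k1 n2 k2 : ℕ} {g1 : Fin n1 → L} {g2 : Fin n2 → L}

lemma vecMul_kronecker_moore_apply (x : Fin k1 × Fin k2 → L) (j1 : Fin n1) (j2 : Fin n2) :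
    (x ᵥ* (moore (Fintype.card K) g1 k1 ⊗ₖ moore (Fintype.card K) g2 k2)) (j1, j2) =
      linearizedMap₂ K x (g1 j1) (g2 j2) := by
  simp only [vecMul, dotProduct, moore, kroneckerMap_apply, of_apply, Fintype.sum_prod_type,
    linearizedMap₂, LinearMap.coe_comp, Function.comp_apply, LinearMap.restrictScalars_apply,
    LinearMap.pi_apply, linearizedMap_apply, sum_mul]
  rw [sum_comm]
  exact sum_congr rfl fun _ _ => sum_congr rfl fun _ _ => by ring

lemma span_range_vecMul_kronecker_moore (x : Fin k1 × Fin k2 → L) :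
    Submodule.span K
        (Set.range (x ᵥ* (moore (Fintype.card K) g1 k1 ⊗ₖ moore (Fintype.card K) g2 k2))) =
      Submodule.map₂ (linearizedMap₂ K x) (Submodule.span K (Set.range g1))
        (Submodule.span K (Set.range g2)) := by
  rw [Submodule.map₂_span_span, Set.image2_range]
  congr
  ext ⟨j1, j2⟩
  exact vecMul_kronecker_moore_apply x j1 j2

lemma rankWeight_vecMul_kronecker_moore_ge {x : Fin k1 × Fin k2 → L} (hx : x ≠ 0)
    (hk1 : k1 ≤ rankWeight K g1) :
    rankWeight K g2 - (k2 - 1) ≤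
      rankWeight K (x ᵥ* (moore (Fintype.card K) g1 k1 ⊗ₖ moore (Fintype.card K) g2 k2)) := by
  obtain ⟨⟨i1, i2⟩, hi⟩ := Function.ne_iff.1 hx
  obtain ⟨a, ha, hya⟩ := exists_mem_linearizedMap_ne_zero (x := fun i1 => x (i1, i2))
    (Function.ne_iff.2 ⟨i1, hi⟩) hk1
  set y := fun i2 => linearizedMap K (fun i1 => x (i1, i2)) a
  have hy : y ≠ 0 := Function.ne_iff.2 ⟨i2, hya⟩
  have hmap : (Submodule.span K (Set.range g2)).map (linearizedMap K y) ≤ Submodule.span K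
      (Set.range (x ᵥ* (moore (Fintype.card K) g1 k1 ⊗ₖ moore (Fintype.card K) g2 k2))) := by
    rw [span_range_vecMul_kronecker_moore]
    rintro _ ⟨b, hb, rfl⟩
    exact Submodule.apply_mem_map₂ (linearizedMap₂ K x) ha hb
  have := FiniteDimensional.span_of_finite K (Set.finite_range g2)
  have := FiniteDimensional.span_of_finite K (Set.finite_range
    (x ᵥ* (moore (Fintype.card K) g1 k1 ⊗ₖ moore (Fintype.card K) g2 k2)))
  exact (finrank_map_linearizedMap_ge hy _).trans (Submodule.finrank_mono hmap)

end Moore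

theorem gk_min_rank_distance_case2_general
    (q n1 k1 n2 k2 : ℕ)
    (K L : Type*) [Field K] [Fintype K] [Field L] [Algebra K L]
    (hq : Fintype.card K = q)
    (hk1pos : 1 ≤ k1) (hk1n1 : k1 ≤ n1)
    (hk2pos : 1 ≤ k2) (hk2n2 : k2 ≤ n2)
    (g1 : Fin n1 → L) (hg1 : rankWeight K g1 = n1)
    (g2 : Fin n2 → L) (hg2 : rankWeight K g2 = n2) :
    (∀ c : Fin n1 × Fin n2 → L,
      (∃ x : Fin k1 × Fin k2 → L, c = x ᵥ* (moore q g1 k1 ⊗ₖ moore q g2 k2)) →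
      c ≠ 0 → n2 - k2 + 1 ≤ rankWeight K c) ∧
    ∃ c : Fin n1 × Fin n2 → L,
      (∃ x : Fin k1 × Fin k2 → L, c = x ᵥ* (moore q g1 k1 ⊗ₖ moore q g2 k2)) ∧
      c ≠ 0 ∧ rankWeight K c ≤ (n1 - k1 + 1) * (n2 - k2 + 1) := by
  classical
  subst hq
  refine ⟨?_, ?_⟩
  · rintro c ⟨x, rfl⟩ hc
    have hx : x ≠ 0 := by
      rintro rfl
      exact hc (zero_vecMul _)
    have := rankWeight_vecMul_kronecker_moore_ge (g2 := g2) hx (hg1 ▸ hk1n1)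
    omega
  · obtain ⟨x1, hc1, hw1⟩ := exists_vecMul_moore_ne_zero_hammingNorm_le hk1pos (hg1 ▸ hk1n1)
    obtain ⟨x2, hc2, hw2⟩ := exists_vecMul_moore_ne_zero_hammingNorm_le hk2pos (hg2 ▸ hk2n2)
    refine ⟨_, ⟨fun i => x1 i.1 * x2 i.2, rfl⟩, ?_⟩
    rw [outer_vecMul_kronecker]
    refine ⟨?_, ?_⟩
    · rw [← hammingNorm_pos_iff, hammingNorm_outer]
      exact Nat.mul_pos (hammingNorm_pos_iff.2 hc1) (hammingNorm_pos_iff.2 hc2)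
    · calc rankWeight K _ ≤ hammingNorm _ := rankWeight_le_hammingNorm K _
        _ = _ := hammingNorm_outer _ _
        _ ≤ _ := Nat.mul_le_mul hw1 hw2

theorem gk_min_rank_distance_case2
    (q m n1 k1 n2 k2 : ℕ)
    (K L : Type*) [Field K] [Fintype K] [Field L] [Algebra K L]
    (hq : Fintype.card K = q) (hm : Module.finrank K L = m)
    (hk1pos : 1 ≤ k1) (hk1n1 : k1 ≤ n1)
    (hk2pos : 1 ≤ k2) (hk2n2 : k2 ≤ n2)
    (hnm : n1 * n2 ≤ m) (hd : n1 - k1 ≤ n2 - k2)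
    (g1 : Fin n1 → L) (hg1 : rankWeight K g1 = n1)
    (g2 : Fin n2 → L) (hg2 : rankWeight K g2 = n2) :
    (∀ c : Fin n1 × Fin n2 → L,
      (∃ x : Fin k1 × Fin k2 → L, c = x ᵥ* (moore q g1 k1 ⊗ₖ moore q g2 k2)) →
      c ≠ 0 → n2 - k2 + 1 ≤ rankWeight K c) ∧
    ∃ c : Fin n1 × Fin n2 → L,
      (∃ x : Fin k1 × Fin k2 → L, c = x ᵥ* (moore q g1 k1 ⊗ₖ moore q g2 k2)) ∧
      c ≠ 0 ∧ rankWeight K c ≤ (n1 - k1 + 1) * (n2 - k2 + 1) :=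
  gk_min_rank_distance_case2_general q n1 k1 n2 k2 K L hq hk1pos hk1n1 hk2pos hk2n2 g1 hg1 g2 hg2
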